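/- On the free product G = G₁ * ⋯ * G_r, for each i the generating function Mᵢ*(z) of self-avoiding walks from the root that visit Vᵢ \ {oᵢ} satisfies Mᵢ*(z) = Mᵢ(z)·(1 + Σ_{j≠i} Mⱼ*(z)) as an identity of formal power series. -/

import Mathlib

open Filter Topology

/-- A valid word in the free product: letters are non-root vertices of the factors,
no two consecutive letters from the same factor. -/
def ValidWord {r : ℕ} {V : Fin r → Type} (o : ∀ i, V i) (l : List (Σ i, V i)) : Prop :=
  (∀ x ∈ l, x.2 ≠ o x.1) ∧ l.Chain' (fun a b => a.1 ≠ b.1)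

/-- The vertex set of the free product of rooted graphs: the set of valid words. -/
def FPV {r : ℕ} (V : Fin r → Type) (o : ∀ i, V i) : Type :=
  {l : List (Σ i, V i) // ValidWord o l}

/-- The edge relation of the free product on raw words: `w x` is adjacent to `w y`
whenever `x, y` belong to the same factor (where `x` or `y` may be the root, i.e.
the empty extension) and are adjacent there. -/
def RawAdj {r : ℕ} {V : Fin r → Type} (G : ∀ i, SimpleGraph (V i)) (o : ∀ i, V i) :
    List (Σ i, V i) → List (Σ i, V i) → Prop := fun a b =>
  (∃ (w : List (Σ i, V i)) (i : Fin r) (x y : V i),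
      (G i).Adj x y ∧ a = w ++ [⟨i, x⟩] ∧ b = w ++ [⟨i, y⟩])
  ∨ (∃ (i : Fin r) (y : V i), (G i).Adj (o i) y ∧ b = a ++ [⟨i, y⟩])
  ∨ (∃ (i : Fin r) (y : V i), (G i).Adj (o i) y ∧ a = b ++ [⟨i, y⟩])

/-- The free product `G₁ * ⋯ * G_r` of rooted graphs. -/
def freeProd {r : ℕ} {V : Fin r → Type} (G : ∀ i, SimpleGraph (V i)) (o : ∀ i, V i) :
    SimpleGraph (FPV V o) :=
  SimpleGraph.fromRel (fun a b => RawAdj G o a.1 b.1)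

/-- The root (empty word) of the free product. -/
def fpRoot {r : ℕ} (V : Fin r → Type) (o : ∀ i, V i) : FPV V o :=
  ⟨[], fun x hx => absurd hx List.not_mem_nil, List.IsChain.nil⟩

/-- `sawCount G v n` is the number of self-avoiding walks of length `n` in `G` starting at `v`,
i.e. paths `[v₀, …, vₙ]` with `v₀ = v`, consecutive vertices adjacent, and no repeated vertex. -/
noncomputable def sawCount {V : Type*} (G : SimpleGraph V) (v : V) (n : ℕ) : ℕ :=
  Set.ncard {l : List V | l.length = n + 1 ∧ l.head? = some v ∧ l.Chain' G.Adj ∧ l.Nodup}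

/-- A graph is quasi-transitive if its automorphism group acts with finitely many orbits. -/
def QuasiTransitive {V : Type*} (G : SimpleGraph V) : Prop :=
  ∃ s : Finset V, ∀ v : V, ∃ φ : G ≃g G, φ v ∈ s

/-- A graph is locally finite if every vertex has finitely many neighbours. -/
def LocFinite {V : Type*} (G : SimpleGraph V) : Prop := ∀ v, (G.neighborSet v).Finite

/-- `sawCountVia G o i n` counts self-avoiding walks of length `n` in the free product
starting at the root whose first step enters the copy of the `i`-th factor
(equivalently, which visit `Vᵢ \ {oᵢ}`). -/
noncomputable def sawCountVia {r : ℕ} {V : Fin r → Type} (G : ∀ i, SimpleGraph (V i))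
    (o : ∀ i, V i) (i : Fin r) (n : ℕ) : ℕ :=
  Set.ncard {l : List (FPV V o) |
    l.length = n + 1 ∧ l.head? = some (fpRoot V o) ∧ l.Chain' (freeProd G o).Adj ∧ l.Nodup ∧
    ∃ (v : FPV V o) (x : V i), l[1]? = some v ∧ v.1 = [⟨i, x⟩]}

/-!
A self-avoiding walk from the root whose first step enters the copy of `Gᵢ` first runs through
words of length at most one, that is, along a self-avoiding walk `oᵢ, x₁, …, x_k` (`k ≥ 1`) in
`Gᵢ`. If it goes on, its next step appends a letter `y` of some factor `j ≠ i`; as `x_k` has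
already been visited and cuts the branch of words beginning with `x_k` off the rest of the graph,
the walk never leaves that branch, and deleting the first letter turns its remainder into a
self-avoiding walk from the root whose first step enters `G_j`. Gluing inverts this, so for each
`k` the walks are in bijection with pairs (a self-avoiding walk of length `k` in `Gᵢ`, a
self-avoiding walk from the root of the remaining length whose first step avoids `Gᵢ`), which is
the coefficientwise form of the identity.
-/

namespace List

variable {α : Type*}

theorem IsChain.append_tail {R : α → α → Prop} {l₁ l₂ : List α} (h₁ : l₁.IsChain R)
    (h₂ : l₂.IsChain R) (h : l₁.getLast? = l₂.head?) : (l₁ ++ l₂.tail).IsChain R := by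
  rcases l₂ with _ | ⟨b, l₂⟩
  · simpa using h₁
  refine isChain_append.mpr ⟨h₁, h₂.tail, fun x hx y hy => ?_⟩
  obtain rfl : b = x := by simpa [h] using hx
  exact (List.isChain_cons.mp h₂).1 y hy

theorem drop_append_tail {l₁ l₂ : List α} {k : ℕ} (hk : l₁.length = k + 1)
    (h : l₁.getLast? = l₂.head?) : (l₁ ++ l₂.tail).drop k = l₂ := by
  obtain ⟨l₁, a, rfl⟩ := l₁.eq_nil_or_concat'.resolve_left (by rintro rfl; simp at hk)
  obtain ⟨t, rfl⟩ := head?_eq_some_iff.mp (by simpa using h.symm)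
  rw [append_assoc, drop_left' (by simpa using hk)]
  rfl

theorem drop_length_takeWhile (p : α → Bool) (l : List α) :
    l.drop (l.takeWhile p).length = l.dropWhile p := by
  induction l with
  | nil => rfl
  | cons a l ih => by_cases h : p a <;> simp [h, ih]

end List

namespace SimpleGraph

variable {W : Type*} (H : SimpleGraph W)

def sawSet (v : W) (n : ℕ) : Set (List W) :=
  {l | l.length = n + 1 ∧ l.head? = some v ∧ l.IsChain H.Adj ∧ l.Nodup}

theorem sawCount_eq_ncard_sawSet (v : W) (n : ℕ) : sawCount H v n = (H.sawSet v n).ncard := rfl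

variable {H}

theorem finite_setOf_isChain (hH : ∀ v, (H.neighborSet v).Finite) : ∀ (n : ℕ) (v : W),
    {l : List W | l.length = n + 1 ∧ l.head? = some v ∧ l.IsChain H.Adj}.Finite
  | 0, v => (Set.finite_singleton [v]).subset fun l ⟨hl, hv, _⟩ => by
      obtain ⟨a, rfl⟩ := List.length_eq_one_iff.mp hl
      simpa using hv
  | n + 1, v => by
    refine ((hH v).biUnion fun w _ => (finite_setOf_isChain hH n w).image (List.cons v)).subset ?_
    rintro (_ | ⟨a, _ | ⟨b, l⟩⟩) ⟨hl, hv, hc⟩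
    any_goals simp at hl
    obtain rfl : a = v := by simpa using hv
    obtain ⟨hab, hc⟩ := List.isChain_cons_cons.mp hc
    exact Set.mem_biUnion hab ⟨b :: l, ⟨by simpa using hl, rfl, hc⟩, rfl⟩

theorem finite_sawSet (hH : ∀ v, (H.neighborSet v).Finite) (v : W) (n : ℕ) :
    (H.sawSet v n).Finite :=
  (finite_setOf_isChain hH n v).subset fun _ hl => ⟨hl.1, hl.2.1, hl.2.2.1⟩

theorem take_mem_sawSet {v : W} {n k : ℕ} {l : List W} (hl : l ∈ H.sawSet v n) (hk : k ≤ n) :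
    l.take (k + 1) ∈ H.sawSet v k := by
  obtain ⟨hlen, hv, hc, hnd⟩ := hl
  refine ⟨by simp [hlen, hk], ?_, hc.take _, hnd.sublist (List.take_sublist _ _)⟩
  rw [List.head?_take, if_neg k.succ_ne_zero, hv]

theorem getLastD_ne_of_mem_sawSet {v : W} {k : ℕ} {l : List W} (hl : l ∈ H.sawSet v k)
    (hk : k ≠ 0) : l.getLastD v ≠ v := by
  obtain ⟨hlen, hhd, -, hnd⟩ := hl
  obtain ⟨t, rfl⟩ := List.head?_eq_some_iff.mp hhd
  have ht : t ≠ [] := by rintro rfl; simp at hlen; omega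
  rw [List.getLastD_cons, List.getLastD_eq_getLast?, List.getLast?_eq_some_getLast ht]
  exact fun h => (List.nodup_cons.mp hnd).1 (h ▸ List.getLast_mem ht)

end SimpleGraph

section RawAdj

variable {r : ℕ} {V : Fin r → Type} {G : ∀ i, SimpleGraph (V i)} {o : ∀ i, V i}
  {a b u v : List (Σ i, V i)}

theorem RawAdj.symm (h : RawAdj G o a b) : RawAdj G o b a := by
  rcases h with ⟨w, i, x, y, hxy, rfl, rfl⟩ | ⟨i, y, hy, rfl⟩ | ⟨i, y, hy, rfl⟩
  · exact Or.inl ⟨w, i, y, x, hxy.symm, rfl, rfl⟩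
  · exact Or.inr (Or.inr ⟨i, y, hy, rfl⟩)
  · exact Or.inr (Or.inl ⟨i, y, hy, rfl⟩)

theorem RawAdj.ne (h : RawAdj G o a b) : a ≠ b := by
  rcases h with ⟨w, i, x, y, hxy, rfl, rfl⟩ | ⟨i, y, hy, rfl⟩ | ⟨i, y, hy, rfl⟩
  · simpa using hxy.ne
  · simp
  · simp

theorem freeProd_adj_iff {a b : FPV V o} : (freeProd G o).Adj a b ↔ RawAdj G o a.1 b.1 := by
  refine ⟨fun h => ?_, fun h => ⟨fun hab => h.ne (congrArg Subtype.val hab), Or.inl h⟩⟩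
  obtain ⟨-, h | h⟩ := h
  exacts [h, h.symm]

theorem RawAdj.cons (c : Σ i, V i) (h : RawAdj G o u v) : RawAdj G o (c :: u) (c :: v) := by
  rcases h with ⟨w, i, x, y, hxy, rfl, rfl⟩ | ⟨i, y, hy, rfl⟩ | ⟨i, y, hy, rfl⟩
  · exact Or.inl ⟨c :: w, i, x, y, hxy, rfl, rfl⟩
  · exact Or.inr (Or.inl ⟨i, y, hy, rfl⟩)
  · exact Or.inr (Or.inr ⟨i, y, hy, rfl⟩)

theorem RawAdj.of_cons {c : Σ i, V i} (h : RawAdj G o (c :: u) (c :: v)) : RawAdj G o u v := by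
  rcases h with ⟨_ | ⟨d, w⟩, i, x, y, hxy, hu, hv⟩ | ⟨i, y, hy, hv⟩ | ⟨i, y, hy, hu⟩
  · simp only [List.nil_append, List.cons.injEq] at hu hv
    obtain ⟨rfl, rfl⟩ := hu
    obtain ⟨hxy', -⟩ := hv
    simp at hxy'
    exact absurd hxy' hxy.ne
  · simp only [List.cons_append, List.cons.injEq] at hu hv
    exact Or.inl ⟨w, i, x, y, hxy, hu.2, hv.2⟩
  · exact Or.inr (Or.inl ⟨i, y, hy, (List.cons.inj hv).2⟩)
  · exact Or.inr (Or.inr ⟨i, y, hy, (List.cons.inj hu).2⟩)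

theorem rawAdj_nil_left_iff :
    RawAdj G o [] v ↔ ∃ c : Σ i, V i, (G c.1).Adj (o c.1) c.2 ∧ v = [c] := by
  constructor
  · rintro (⟨w, i, x, y, hxy, hu, hv⟩ | ⟨i, y, hy, rfl⟩ | ⟨i, y, hy, hu⟩)
    · simp at hu
    · exact ⟨⟨i, y⟩, hy, rfl⟩
    · simp at hu
  · rintro ⟨⟨i, y⟩, hy, rfl⟩
    exact Or.inr (Or.inl ⟨i, y, hy, rfl⟩)

theorem rawAdj_singleton_iff {i : Fin r} {x y : V i} :
    RawAdj G o [⟨i, x⟩] [⟨i, y⟩] ↔ (G i).Adj x y := by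
  refine ⟨?_, fun h => Or.inl ⟨[], i, x, y, h, rfl, rfl⟩⟩
  rintro (⟨w, j, x', y', hxy, hu, hv⟩ | ⟨j, y', -, hv⟩ | ⟨j, y', -, hu⟩)
  · obtain rfl : w = [] := by simpa using congrArg List.length hu
    simp only [List.nil_append, List.cons.injEq, Sigma.mk.injEq, and_true] at hu hv
    obtain ⟨rfl, hx⟩ := hu
    rw [heq_iff_eq.mp hx, heq_iff_eq.mp hv.2]
    exact hxy
  · simpa using congrArg List.length hv
  · simpa using congrArg List.length hu

theorem RawAdj.exists_eq_append (h : RawAdj G o u v) (hlen : u.length < v.length) :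
    ∃ c, v = u ++ [c] := by
  rcases h with ⟨w, i, x, y, -, rfl, rfl⟩ | ⟨i, y, -, rfl⟩ | ⟨i, y, -, rfl⟩
  · simp at hlen
  · exact ⟨_, rfl⟩
  · simp at hlen

end RawAdj

namespace FreeProd

variable {r : ℕ} {V : Fin r → Type} {G : ∀ i, SimpleGraph (V i)} {o : ∀ i, V i}

def InBranch (w : List (Σ i, V i)) (j : Fin r) (u : List (Σ i, V i)) : Prop :=
  ∃ c t, c.1 = j ∧ u = w ++ c :: t

theorem InBranch.eq_or_inBranch_of_rawAdj {w u v : List (Σ i, V i)} {j : Fin r}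
    (hu : InBranch w j u) (h : RawAdj G o u v) : v = w ∨ InBranch w j v := by
  obtain ⟨c, t, rfl, rfl⟩ := hu
  rcases h with ⟨w', i, x, y, -, hu, rfl⟩ | ⟨i, y, -, rfl⟩ | ⟨i, y, -, hu⟩
  · rcases t.eq_nil_or_concat' with rfl | ⟨t, e, rfl⟩
    · obtain ⟨rfl, hc⟩ := List.append_inj' hu rfl
      cases hc
      exact Or.inr ⟨⟨i, y⟩, [], rfl, rfl⟩
    · have hu : (w ++ c :: t) ++ [e] = w' ++ [⟨i, x⟩] := by simpa using hu
      obtain ⟨rfl, -⟩ := List.append_inj' hu rfl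
      exact Or.inr ⟨c, t ++ [⟨i, y⟩], rfl, by simp⟩
  · exact Or.inr ⟨c, t ++ [⟨i, y⟩], rfl, by simp⟩
  · rcases t.eq_nil_or_concat' with rfl | ⟨t, e, rfl⟩
    · exact Or.inl (List.append_inj' hu rfl).1.symm
    · have hu : (w ++ c :: t) ++ [e] = v ++ [⟨i, y⟩] := by simpa using hu
      exact Or.inr ⟨c, t, rfl, (List.append_inj' hu rfl).1.symm⟩

theorem inBranch_of_isChain {w : List (Σ i, V i)} {j : Fin r} {u : FPV V o} :
    ∀ {l : List (FPV V o)}, (u :: l).IsChain (freeProd G o).Adj → (∀ v ∈ l, v.1 ≠ w) →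
      InBranch w j u.1 → ∀ v ∈ l, InBranch w j v.1
  | [], _, _, _ => by simp
  | b :: l, hl, hw, hu => by
    obtain ⟨hub, hl⟩ := List.isChain_cons_cons.mp hl
    have hb : InBranch w j b.1 :=
      (hu.eq_or_inBranch_of_rawAdj (freeProd_adj_iff.mp hub)).resolve_left (hw b (by simp))
    simpa [hb] using inBranch_of_isChain hl (fun v hv => hw v (by simp [hv])) hb

theorem eq_fpRoot_iff {u : FPV V o} : u = fpRoot V o ↔ u.1 = [] :=
  ⟨fun h => h ▸ rfl, fun h => Subtype.ext h⟩

theorem validWord_cons_iff {c : Σ i, V i} {w : List (Σ i, V i)} :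
    ValidWord o (c :: w) ↔ c.2 ≠ o c.1 ∧ (∀ d ∈ w.head?, c.1 ≠ d.1) ∧ ValidWord o w := by
  simp only [ValidWord, List.Chain', List.forall_mem_cons, List.isChain_cons]
  tauto

variable (o) in
noncomputable def ofFactor (i : Fin r) (x : V i) : FPV V o :=
  open Classical in
  if h : x = o i then fpRoot V o
  else ⟨[⟨i, x⟩], validWord_cons_iff.mpr ⟨h, by simp, by simp [ValidWord, List.Chain']⟩⟩

theorem ofFactor_self (i : Fin r) : ofFactor o i (o i) = fpRoot V o := dif_pos rfl

theorem ofFactor_val {i : Fin r} {x : V i} (hx : x ≠ o i) : (ofFactor o i x).1 = [⟨i, x⟩] := by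
  simp [ofFactor, hx]

theorem ofFactor_val_length_le (i : Fin r) (x : V i) : (ofFactor o i x).1.length ≤ 1 := by
  by_cases hx : x = o i
  · simp [hx, ofFactor_self, fpRoot]
  · simp [ofFactor_val hx]

theorem ofFactor_injective (i : Fin r) : Function.Injective (ofFactor o i) := by
  intro x y hxy
  by_cases hx : x = o i <;> by_cases hy : y = o i
  · rw [hx, hy]
  all_goals have h := congrArg Subtype.val hxy
  · simp [hx, ofFactor_self, ofFactor_val hy, fpRoot] at h
  · simp [hy, ofFactor_self, ofFactor_val hx, fpRoot] at h
  · simpa [ofFactor_val hx, ofFactor_val hy] using h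

theorem adj_ofFactor_iff {i : Fin r} {x y : V i} :
    (freeProd G o).Adj (ofFactor o i x) (ofFactor o i y) ↔ (G i).Adj x y := by
  rw [freeProd_adj_iff]
  by_cases hx : x = o i <;> by_cases hy : y = o i
  · subst hx hy; simp [ofFactor_self, fpRoot, RawAdj]
  · subst hx; simp [ofFactor_self, ofFactor_val hy, fpRoot, rawAdj_nil_left_iff]
  · subst hy
    rw [ofFactor_self, ofFactor_val hx, (G i).adj_comm]
    exact ⟨fun h => by simpa [fpRoot, rawAdj_nil_left_iff] using h.symm,
      fun h => RawAdj.symm (rawAdj_nil_left_iff.mpr ⟨⟨i, x⟩, h, rfl⟩)⟩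
  · rw [ofFactor_val hx, ofFactor_val hy, rawAdj_singleton_iff]

variable (o) in
noncomputable def toFactor (i : Fin r) : FPV V o → V i :=
  @Function.invFun _ _ ⟨o i⟩ (ofFactor o i)

theorem toFactor_ofFactor (i : Fin r) (x : V i) : toFactor o i (ofFactor o i x) = x :=
  @Function.leftInverse_invFun _ _ ⟨o i⟩ _ (ofFactor_injective i) x

theorem ofFactor_toFactor {i : Fin r} {u : FPV V o} (h : ∃ x, ofFactor o i x = u) :
    ofFactor o i (toFactor o i u) = u :=
  @Function.invFun_eq _ _ ⟨o i⟩ _ _ h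

variable (o) in
def dropFirst (u : FPV V o) : FPV V o :=
  ⟨u.1.tail, fun x hx => u.2.1 x (List.mem_of_mem_tail hx), List.IsChain.tail u.2.2⟩

variable (o) in
/-- Junk value `u` when `c :: u.1` is not a valid word. -/
noncomputable def consLetter (c : Σ i, V i) (u : FPV V o) : FPV V o :=
  open Classical in
  if h : ValidWord o (c :: u.1) then ⟨c :: u.1, h⟩ else u

theorem consLetter_val {c : Σ i, V i} {u : FPV V o} (h : ValidWord o (c :: u.1)) :
    (consLetter o c u).1 = c :: u.1 := by
  simp [consLetter, h]

theorem dropFirst_consLetter {c : Σ i, V i} {u : FPV V o} (h : ValidWord o (c :: u.1)) :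
    dropFirst o (consLetter o c u) = u :=
  Subtype.ext (by simp [dropFirst, consLetter_val h])

theorem consLetter_dropFirst {c : Σ i, V i} {u : FPV V o} {t : List (Σ i, V i)}
    (h : u.1 = c :: t) : consLetter o c (dropFirst o u) = u := by
  have hv : ValidWord o (c :: (dropFirst o u).1) := by simpa [dropFirst, h] using u.2
  exact Subtype.ext ((consLetter_val hv).trans (by simp [dropFirst, h]))

theorem adj_consLetter_iff {c : Σ i, V i} {u v : FPV V o} (hu : ValidWord o (c :: u.1))
    (hv : ValidWord o (c :: v.1)) :
    (freeProd G o).Adj (consLetter o c u) (consLetter o c v) ↔ (freeProd G o).Adj u v := by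
  rw [freeProd_adj_iff, freeProd_adj_iff, consLetter_val hu, consLetter_val hv]
  exact ⟨RawAdj.of_cons, RawAdj.cons c⟩

theorem freeProd_neighborSet_finite (hlf : ∀ i, LocFinite (G i)) (v : FPV V o) :
    ((freeProd G o).neighborSet v).Finite := by
  -- a neighbour drops, changes or appends a last letter, adjacent to a root or a letter of `v`
  set C : Set (Σ i, V i) := (⋃ i, Sigma.mk i '' (G i).neighborSet (o i)) ∪
    ⋃ d ∈ {d | d ∈ v.1}, Sigma.mk d.1 '' (G d.1).neighborSet d.2
  have hC : C.Finite := (Set.finite_iUnion fun i => (hlf i (o i)).image _).union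
    (v.1.finite_toSet.biUnion fun d _ => (hlf d.1 d.2).image _)
  have hS : (insert v.1.dropLast ((v.1.dropLast ++ [·]) '' C ∪ (v.1 ++ [·]) '' C)).Finite :=
    ((hC.image _).union (hC.image _)).insert _
  refine (hS.preimage Subtype.val_injective.injOn).subset fun b hb => ?_
  rcases freeProd_adj_iff.mp hb with ⟨w, i, x, y, hxy, hv, hb⟩ | ⟨i, y, hy, hb⟩ | ⟨i, y, -, hv⟩
  · refine Or.inr (Or.inl ⟨⟨i, y⟩, Or.inr (Set.mem_biUnion (x := ⟨i, x⟩) ?_ ⟨y, hxy, rfl⟩), ?_⟩)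
    · simp [hv]
    · simp [hv, hb]
  · exact Or.inr (Or.inr ⟨⟨i, y⟩, Or.inl (Set.mem_iUnion.mpr ⟨i, y, hy, rfl⟩), hb.symm⟩)
  · exact Or.inl (by simp [hv])

def EntersVia (i : Fin r) (l : List (FPV V o)) : Prop :=
  ∃ (v : FPV V o) (x : V i), l[1]? = some v ∧ v.1 = [⟨i, x⟩]

variable (G o) in
def sawsVia (i : Fin r) (n : ℕ) : Set (List (FPV V o)) :=
  {l ∈ (freeProd G o).sawSet (fpRoot V o) n | EntersVia i l}

variable (G o) in
def sawsAvoiding (i : Fin r) (n : ℕ) : Set (List (FPV V o)) :=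
  {l ∈ (freeProd G o).sawSet (fpRoot V o) n | ¬ EntersVia i l}

theorem sawCountVia_eq_ncard (i : Fin r) (n : ℕ) :
    sawCountVia G o i n = (sawsVia G o i n).ncard := by
  rw [sawCountVia]
  congr 1
  ext l
  exact ⟨fun ⟨h₁, h₂, h₃, h₄, h₅⟩ => ⟨⟨h₁, h₂, h₃, h₄⟩, h₅⟩,
    fun ⟨⟨h₁, h₂, h₃, h₄⟩, h₅⟩ => ⟨h₁, h₂, h₃, h₄, h₅⟩⟩

theorem EntersVia.eq {i j : Fin r} {l : List (FPV V o)} (hi : EntersVia i l)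
    (hj : EntersVia j l) : i = j := by
  obtain ⟨v, x, hv, hx⟩ := hi
  obtain ⟨w, y, hw, hy⟩ := hj
  obtain rfl : v = w := Option.some.inj (hv.symm.trans hw)
  exact (Sigma.mk.inj_iff.mp (List.cons.inj (hx.symm.trans hy)).1).1

theorem exists_entersVia {n : ℕ} {l : List (FPV V o)}
    (hl : l ∈ (freeProd G o).sawSet (fpRoot V o) n) (hn : n ≠ 0) : ∃ j, EntersVia j l := by
  obtain ⟨hlen, hhd, hc, -⟩ := hl
  obtain ⟨_ | ⟨u, t⟩, rfl⟩ := List.head?_eq_some_iff.mp hhd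
  · simp at hlen; omega
  obtain ⟨⟨j, y⟩, -, hu⟩ :=
    rawAdj_nil_left_iff.mp (freeProd_adj_iff.mp (List.isChain_cons_cons.mp hc).1)
  exact ⟨j, u, y, rfl, hu⟩

theorem val_ne_nil_of_mem_tail {n : ℕ} {l : List (FPV V o)}
    (hl : l ∈ (freeProd G o).sawSet (fpRoot V o) n) : ∀ v ∈ l.tail, v.1 ≠ [] := by
  obtain ⟨t, rfl⟩ := List.head?_eq_some_iff.mp hl.2.1
  intro v hv hnil
  exact (List.nodup_cons.mp hl.2.2.2).1 (eq_fpRoot_iff.mpr hnil ▸ hv)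

theorem inBranch_of_entersVia {n : ℕ} {j : Fin r} {l : List (FPV V o)}
    (hl : l ∈ (freeProd G o).sawSet (fpRoot V o) n) (hj : EntersVia j l) :
    ∀ v ∈ l.tail, InBranch [] j v.1 := by
  obtain ⟨u, y, hu, hy⟩ := hj
  obtain ⟨t, rfl⟩ := List.head?_eq_some_iff.mp hl.2.1
  obtain ⟨t, rfl⟩ : ∃ t', t = u :: t' := by cases t <;> simp_all
  have hu : InBranch [] j u.1 := ⟨⟨j, y⟩, [], rfl, hy⟩
  exact List.forall_mem_cons.mpr ⟨hu, inBranch_of_isChain (List.isChain_cons_cons.mp hl.2.2.1).2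
    (fun v hv => val_ne_nil_of_mem_tail hl v (List.mem_cons_of_mem _ hv)) hu⟩

theorem validWord_cons_of_mem_sawsAvoiding {i : Fin r} {m : ℕ} {Q : List (FPV V o)}
    (hQ : Q ∈ sawsAvoiding G o i m) {x : V i} (hx : x ≠ o i) :
    ∀ u ∈ Q, ValidWord o (⟨i, x⟩ :: u.1) := by
  obtain ⟨hQ, hi⟩ := hQ
  obtain ⟨t, hQt⟩ := List.head?_eq_some_iff.mp hQ.2.1
  intro u hu
  refine validWord_cons_iff.mpr ⟨hx, ?_, u.2⟩
  rcases List.mem_cons.mp (hQt ▸ hu) with rfl | hu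
  · simp [fpRoot]
  obtain ⟨j, hj⟩ := exists_entersVia hQ (by rintro rfl; simp_all [SimpleGraph.sawSet])
  obtain ⟨c, t', rfl, hu⟩ := inBranch_of_entersVia hQ hj u (by simpa [hQt] using hu)
  rintro d hd
  obtain rfl : c = d := by simpa [hu] using hd
  exact fun hij => hi ((show i = c.1 from hij) ▸ hj)

theorem sawsAvoiding_zero (i : Fin r) : sawsAvoiding G o i 0 = {[fpRoot V o]} := by
  ext l
  constructor
  · rintro ⟨⟨hlen, hhd, -⟩, -⟩
    obtain ⟨t, rfl⟩ := List.head?_eq_some_iff.mp hhd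
    simpa using hlen
  · rintro rfl
    exact ⟨⟨rfl, rfl, List.isChain_singleton _, List.nodup_singleton _⟩, by simp [EntersVia]⟩

theorem sawsAvoiding_eq_biUnion {i : Fin r} {m : ℕ} (hm : m ≠ 0) :
    sawsAvoiding G o i m = ⋃ j ∈ ((Finset.univ.erase i : Finset (Fin r)) : Set (Fin r)),
      sawsVia G o j m := by
  ext l
  simp only [sawsAvoiding, sawsVia, Set.mem_ofPred_eq, Set.mem_iUnion, Finset.coe_erase,
    Finset.coe_univ, Set.mem_sdiff, Set.mem_univ, Set.mem_singleton_iff, true_and, exists_prop]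
  constructor
  · rintro ⟨hl, hi⟩
    obtain ⟨j, hj⟩ := exists_entersVia hl hm
    exact ⟨j, fun hji => hi (hji ▸ hj), hl, hj⟩
  · rintro ⟨j, hji, hl, hj⟩
    exact ⟨hl, fun hi => hji (hj.eq hi)⟩

theorem ncard_sawsAvoiding (hlf : ∀ i, LocFinite (G i)) (i : Fin r) (m : ℕ) :
    (sawsAvoiding G o i m).ncard =
      if m = 0 then 1 else ∑ j ∈ Finset.univ.erase i, sawCountVia G o j m := by
  split_ifs with hm
  · simp [hm, sawsAvoiding_zero]
  rw [sawsAvoiding_eq_biUnion hm, Set.Finite.ncard_biUnion (Finset.finite_toSet _)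
    (fun j _ => (SimpleGraph.finite_sawSet (freeProd_neighborSet_finite hlf) _ m).subset
      fun _ hl => hl.1), finsum_mem_coe_finset]
  · simp only [sawCountVia_eq_ncard]
  · exact fun j _ j' _ hjj' => Set.disjoint_left.mpr fun l hj hj' => hjj' (hj.2.eq hj'.2)

theorem sawCountVia_zero (i : Fin r) : sawCountVia G o i 0 = 0 := by
  have hempty : sawsVia G o i 0 = ∅ :=
    Set.eq_empty_of_forall_notMem fun l ⟨⟨hlen, _⟩, _, _, hv, _⟩ => by
      simp [List.getElem?_eq_none (show l.length ≤ 1 by omega)] at hv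
  rw [sawCountVia_eq_ncard, hempty, Set.ncard_empty]

def isShort (u : FPV V o) : Bool := u.1.length ≤ 1

variable (o) in
noncomputable def headPart (i : Fin r) (k : ℕ) (l : List (FPV V o)) : List (V i) :=
  (l.take (k + 1)).map (toFactor o i)

variable (o) in
def tailPart (k : ℕ) (l : List (FPV V o)) : List (FPV V o) :=
  (l.drop k).map (dropFirst o)

variable (o) in
/-- Walk along `P` in the copy of `G i` at the root, then along `Q` moved into the branch
hanging off the last vertex of `P`; the inverse of `l ↦ (headPart o i k l, tailPart o k l)`. -/
noncomputable def glue (i : Fin r) (P : List (V i)) (Q : List (FPV V o)) : List (FPV V o) :=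
  P.map (ofFactor o i) ++ (Q.map (consLetter o ⟨i, P.getLastD (o i)⟩)).tail

theorem map_ofFactor_mem_sawSet_iff {i : Fin r} {k : ℕ} {P : List (V i)} :
    P.map (ofFactor o i) ∈ (freeProd G o).sawSet (fpRoot V o) k ↔ P ∈ (G i).sawSet (o i) k := by
  simp only [SimpleGraph.sawSet, Set.mem_ofPred_eq, List.length_map, List.head?_map,
    List.isChain_map, adj_ofFactor_iff, List.nodup_map_iff (ofFactor_injective i)]
  rw [← ofFactor_self (o := o) i, ← Option.map_some,
    (Option.map_injective (ofFactor_injective i)).eq_iff]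

theorem isChain_map_consLetter_iff {c : Σ i, V i} {Q : List (FPV V o)}
    (hQ : ∀ u ∈ Q, ValidWord o (c :: u.1)) :
    (Q.map (consLetter o c)).IsChain (freeProd G o).Adj ↔ Q.IsChain (freeProd G o).Adj := by
  rw [List.isChain_map]
  exact List.IsChain.iff_of_mem_imp fun u v hu hv => adj_consLetter_iff (hQ u hu) (hQ v hv)

theorem nodup_map_consLetter_iff {c : Σ i, V i} {Q : List (FPV V o)}
    (hQ : ∀ u ∈ Q, ValidWord o (c :: u.1)) : (Q.map (consLetter o c)).Nodup ↔ Q.Nodup :=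
  ⟨List.Nodup.of_map _, List.Nodup.map_on fun u hu v hv h => by
    rw [← dropFirst_consLetter (hQ u hu), h, dropFirst_consLetter (hQ v hv)]⟩

theorem consLetter_fpRoot {i : Fin r} {x : V i} (hx : x ≠ o i) :
    consLetter o ⟨i, x⟩ (fpRoot V o) = ofFactor o i x := by
  have h : ValidWord o [⟨i, x⟩] := ofFactor_val hx ▸ (ofFactor o i x).2
  exact Subtype.ext ((consLetter_val h).trans (ofFactor_val hx).symm)

theorem exists_cons_of_isChain {c : Σ i, V i} {w : FPV V o} {B : List (FPV V o)}
    (hc : (w :: B).IsChain (freeProd G o).Adj) (hnd : (w :: B).Nodup) (hw : w.1 = [c])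
    (hB : ∀ b ∈ B.head?, 1 < b.1.length) : ∀ v ∈ w :: B, ∃ t, v.1 = c :: t := by
  rcases B with _ | ⟨b, B⟩
  · simp [hw]
  -- the walk never returns to `w`, which separates the branch above `c` from the rest
  obtain ⟨hwb, hc⟩ := List.isChain_cons_cons.mp hc
  obtain ⟨d, hb⟩ := (freeProd_adj_iff.mp hwb).exists_eq_append (by simpa [hw] using hB b rfl)
  have hbr : InBranch [c] d.1 b.1 := ⟨d, [], rfl, by rw [hb, hw]⟩
  have hrest := inBranch_of_isChain hc (fun v hv hvw => (List.nodup_cons.mp hnd).1 <| by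
    rw [← Subtype.ext (hvw.trans hw.symm)]; exact List.mem_cons_of_mem _ hv) hbr
  refine List.forall_mem_cons.mpr ⟨⟨[], hw⟩, fun v hv => ?_⟩
  obtain ⟨e, t, -, hv⟩ :=
    (List.forall_mem_cons (p := fun v : FPV V o => InBranch [c] d.1 v.1)).mpr ⟨hbr, hrest⟩ v hv
  exact ⟨e :: t, hv⟩

section Forward

variable {i : Fin r} {n k : ℕ} {l : List (FPV V o)}

theorem one_lt_length_takeWhile (hl : l ∈ sawsVia G o i n) :
    1 < (l.takeWhile isShort).length := by
  obtain ⟨⟨-, hhd, -⟩, u, x, hu, hx⟩ := hl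
  obtain ⟨t, rfl⟩ := List.head?_eq_some_iff.mp hhd
  obtain ⟨t, rfl⟩ : ∃ t', t = u :: t' := by cases t <;> simp_all
  rw [List.takeWhile_cons_of_pos (by simp [isShort, fpRoot]),
    List.takeWhile_cons_of_pos (by simp [isShort, hx])]
  simp

theorem le_of_length_takeWhile_eq (hl : l ∈ sawsVia G o i n)
    (hk : (l.takeWhile isShort).length = k + 1) : k ≤ n := by
  have := (List.takeWhile_sublist isShort (l := l)).length_le
  rw [hk, hl.1.1] at this
  omega

theorem exists_ofFactor_eq_of_mem_take (hl : l ∈ sawsVia G o i n)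
    (hk : (l.takeWhile isShort).length = k + 1) :
    ∀ v ∈ l.take (k + 1), ∃ x, ofFactor o i x = v := by
  intro v hv
  rw [← hk, ← List.prefix_iff_eq_take.mp (List.takeWhile_prefix _)] at hv
  have hshort : v.1.length ≤ 1 := by simpa [isShort] using List.mem_takeWhile_imp hv
  obtain ⟨t, rfl⟩ := List.head?_eq_some_iff.mp hl.1.2.1
  rcases List.mem_cons.mp ((List.takeWhile_subset _) hv) with rfl | hv
  · exact ⟨o i, ofFactor_self i⟩
  obtain ⟨c, t', hc, hvc⟩ := inBranch_of_entersVia hl.1 hl.2 v hv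
  obtain rfl : t' = [] := by simpa [hvc] using hshort
  subst hc
  exact ⟨c.2, Subtype.ext (by rw [ofFactor_val (v.2.1 c (by simp [hvc])), hvc]; rfl)⟩

theorem map_ofFactor_headPart (hl : l ∈ sawsVia G o i n)
    (hk : (l.takeWhile isShort).length = k + 1) :
    (headPart o i k l).map (ofFactor o i) = l.take (k + 1) := by
  rw [headPart, List.map_map]
  exact (List.map_congr_left fun v hv =>
    ofFactor_toFactor (exists_ofFactor_eq_of_mem_take hl hk v hv)).trans (List.map_id _)

theorem headPart_mem_sawSet (hl : l ∈ sawsVia G o i n)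
    (hk : (l.takeWhile isShort).length = k + 1) : headPart o i k l ∈ (G i).sawSet (o i) k := by
  rw [← map_ofFactor_mem_sawSet_iff (G := G), map_ofFactor_headPart hl hk]
  exact SimpleGraph.take_mem_sawSet hl.1 (le_of_length_takeWhile_eq hl hk)

theorem getElem?_eq_ofFactor (hl : l ∈ sawsVia G o i n)
    (hk : (l.takeWhile isShort).length = k + 1) :
    ∃ x, x ≠ o i ∧ l[k]? = some (ofFactor o i x) ∧ (headPart o i k l).getLastD (o i) = x := by
  have hkl : k < l.length := by have := le_of_length_takeWhile_eq hl hk; rw [hl.1.1]; omega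
  have hk0 : k ≠ 0 := by have := one_lt_length_takeWhile hl; omega
  have htake := List.take_succ_eq_append_getElem hkl
  obtain ⟨x, hx⟩ := exists_ofFactor_eq_of_mem_take hl hk l[k]
    (by rw [htake]; exact List.mem_append_right _ (List.mem_singleton_self _))
  refine ⟨x, fun hxo => hk0 ?_, by rw [List.getElem?_eq_getElem hkl, hx], ?_⟩
  · obtain ⟨t, hlt⟩ := List.head?_eq_some_iff.mp hl.1.2.1
    have h0 : 0 < l.length := by omega
    have hroot : l[0] = fpRoot V o := by simp [hlt]
    exact (hl.1.2.2.2.getElem_inj_iff (hi := hkl) (hj := h0)).mp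
      (by rw [← hx, hxo, ofFactor_self, hroot])
  · rw [headPart, htake, List.map_append, List.map_singleton, List.getLastD_concat, ← hx,
      toFactor_ofFactor]

theorem exists_cons_of_mem_drop (hl : l ∈ sawsVia G o i n)
    (hk : (l.takeWhile isShort).length = k + 1) :
    ∀ v ∈ l.drop k, ∃ t, v.1 = ⟨i, (headPart o i k l).getLastD (o i)⟩ :: t := by
  obtain ⟨x, hx, hlk, hlast⟩ := getElem?_eq_ofFactor hl hk
  obtain ⟨hkl, hlk⟩ := List.getElem?_eq_some_iff.mp hlk
  have hdrop := List.drop_eq_getElem_cons hkl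
  have hchain := hl.1.2.2.1.drop k
  have hnd := hl.1.2.2.2.sublist (List.drop_sublist k l)
  rw [hdrop, hlk] at hchain hnd ⊢
  rw [hlast]
  refine exists_cons_of_isChain hchain hnd (ofFactor_val hx) ?_
  rw [← hk, List.drop_length_takeWhile]
  intro b hb
  have := List.head?_dropWhile_not isShort l
  rw [hb] at this
  simpa [isShort] using this

theorem map_consLetter_tailPart (hl : l ∈ sawsVia G o i n)
    (hk : (l.takeWhile isShort).length = k + 1) :
    (tailPart o k l).map (consLetter o ⟨i, (headPart o i k l).getLastD (o i)⟩) = l.drop k := by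
  rw [tailPart, List.map_map]
  exact (List.map_congr_left fun v hv =>
    consLetter_dropFirst (exists_cons_of_mem_drop hl hk v hv).choose_spec).trans (List.map_id _)

theorem tailPart_mem_sawsAvoiding (hl : l ∈ sawsVia G o i n)
    (hk : (l.takeWhile isShort).length = k + 1) : tailPart o k l ∈ sawsAvoiding G o i (n - k) := by
  obtain ⟨x, hx, hlk, hlast⟩ := getElem?_eq_ofFactor hl hk
  have hvalid : ∀ u ∈ tailPart o k l, ValidWord o (⟨i, x⟩ :: u.1) := by
    intro u hu
    obtain ⟨v, hv, rfl⟩ := List.mem_map.mp hu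
    obtain ⟨t, ht⟩ := exists_cons_of_mem_drop hl hk v hv
    rw [hlast] at ht
    simpa [dropFirst, ht] using v.2
  have hround := map_consLetter_tailPart hl hk
  rw [hlast] at hround
  have hkn := le_of_length_takeWhile_eq hl hk
  refine ⟨⟨by simp [tailPart, hl.1.1]; omega, ?_, ?_, ?_⟩, fun ⟨u, y, hu, hy⟩ => ?_⟩
  · rw [tailPart, List.head?_map, List.head?_drop, hlk]
    exact congrArg some (Subtype.ext (by simp [dropFirst, ofFactor_val hx, fpRoot]))
  · exact (isChain_map_consLetter_iff hvalid).mp (hround ▸ hl.1.2.2.1.drop k)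
  · exact (nodup_map_consLetter_iff hvalid).mp (hround ▸ hl.1.2.2.2.sublist (List.drop_sublist _ _))
  · have := (validWord_cons_iff.mp (hvalid u (List.mem_of_getElem? hu))).2.1
    simp [hy] at this

theorem glue_headPart_tailPart (hl : l ∈ sawsVia G o i n)
    (hk : (l.takeWhile isShort).length = k + 1) :
    glue o i (headPart o i k l) (tailPart o k l) = l := by
  rw [glue, map_ofFactor_headPart hl hk, map_consLetter_tailPart hl hk, List.tail_drop,
    List.take_append_drop]

end Forward

section Backward

variable {i : Fin r} {k m : ℕ} {P : List (V i)} {Q : List (FPV V o)}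

theorem getLast?_map_ofFactor_eq_head? (hP : P ∈ (G i).sawSet (o i) k) (hk : k ≠ 0)
    (hQ : Q ∈ sawsAvoiding G o i m) :
    (P.map (ofFactor o i)).getLast? = (Q.map (consLetter o ⟨i, P.getLastD (o i)⟩)).head? := by
  have hx := SimpleGraph.getLastD_ne_of_mem_sawSet hP hk
  have hlast : P.getLast? = some (P.getLastD (o i)) := by
    have hne : P ≠ [] := by rintro rfl; simp [SimpleGraph.sawSet] at hP
    rw [List.getLastD_eq_getLast?, List.getLast?_eq_some_getLast hne]
    rfl
  obtain ⟨t, rfl⟩ := List.head?_eq_some_iff.mp hQ.1.2.1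
  rw [List.getLast?_map, hlast, List.map_cons, List.head?_cons, consLetter_fpRoot hx]
  rfl

theorem one_lt_length_of_mem_tail_map_consLetter (hQ : Q ∈ sawsAvoiding G o i m) {x : V i}
    (hx : x ≠ o i) : ∀ b ∈ (Q.map (consLetter o ⟨i, x⟩)).tail, 1 < b.1.length := by
  intro b hb
  rw [← List.map_tail] at hb
  obtain ⟨u, hu, rfl⟩ := List.mem_map.mp hb
  rw [consLetter_val (validWord_cons_of_mem_sawsAvoiding hQ hx u (List.mem_of_mem_tail hu))]
  have := val_ne_nil_of_mem_tail hQ.1 u hu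
  cases h : u.1 <;> simp_all

theorem glue_mem_sawsVia (hP : P ∈ (G i).sawSet (o i) k) (hk : k ≠ 0)
    (hQ : Q ∈ sawsAvoiding G o i m) : glue o i P Q ∈ sawsVia G o i (k + m) := by
  have hx := SimpleGraph.getLastD_ne_of_mem_sawSet hP hk
  have hA : P.map (ofFactor o i) ∈ (freeProd G o).sawSet (fpRoot V o) k :=
    map_ofFactor_mem_sawSet_iff.mpr hP
  have hvalid := validWord_cons_of_mem_sawsAvoiding hQ hx
  refine ⟨⟨?_, ?_, ?_, ?_⟩, ?_⟩
  · simp [glue, hA.1, hQ.1.1]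
    omega
  · simp [glue, List.head?_append, hA.2.1]
  · exact hA.2.2.1.append_tail ((isChain_map_consLetter_iff hvalid).mpr hQ.1.2.2.1)
      (getLast?_map_ofFactor_eq_head? hP hk hQ)
  · refine List.nodup_append.mpr ⟨hA.2.2.2, ((nodup_map_consLetter_iff hvalid).mpr
      hQ.1.2.2.2).sublist (List.tail_sublist _), fun a ha b hb hab => ?_⟩
    obtain ⟨y, -, rfl⟩ := List.mem_map.mp ha
    have := one_lt_length_of_mem_tail_map_consLetter hQ hx b hb
    have := ofFactor_val_length_le (o := o) i y
    rw [hab] at *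
    omega
  · obtain ⟨hlen, hhd, -, hnd⟩ := hP
    obtain ⟨t, rfl⟩ := List.head?_eq_some_iff.mp hhd
    obtain ⟨y, t, rfl⟩ : ∃ y t', t = y :: t' := by
      cases t
      · simp at hlen; omega
      · exact ⟨_, _, rfl⟩
    have hy : y ≠ o i := fun h => (List.nodup_cons.mp hnd).1 (h ▸ List.mem_cons_self)
    exact ⟨ofFactor o i y, y, by simp [glue], ofFactor_val hy⟩

theorem length_takeWhile_glue (hP : P ∈ (G i).sawSet (o i) k) (hk : k ≠ 0)
    (hQ : Q ∈ sawsAvoiding G o i m) : ((glue o i P Q).takeWhile isShort).length = k + 1 := by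
  have hlong := one_lt_length_of_mem_tail_map_consLetter hQ
    (SimpleGraph.getLastD_ne_of_mem_sawSet hP hk)
  rw [glue, List.takeWhile_append_of_pos (fun a ha => by
    obtain ⟨y, -, rfl⟩ := List.mem_map.mp ha
    simpa [isShort] using ofFactor_val_length_le i y)]
  rcases h : (Q.map (consLetter o ⟨i, P.getLastD (o i)⟩)).tail with _ | ⟨b, B⟩
  · simp [hP.1]
  · rw [List.takeWhile_cons_of_neg (by simpa [isShort] using hlong b (h ▸ List.mem_cons_self))]
    simp [hP.1]

theorem headPart_glue (hP : P ∈ (G i).sawSet (o i) k) : headPart o i k (glue o i P Q) = P := by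
  rw [headPart, glue, List.take_left' (by simp [hP.1]), List.map_map]
  exact (List.map_congr_left fun x _ => toFactor_ofFactor i x).trans (List.map_id _)

theorem tailPart_glue (hP : P ∈ (G i).sawSet (o i) k) (hk : k ≠ 0)
    (hQ : Q ∈ sawsAvoiding G o i m) : tailPart o k (glue o i P Q) = Q := by
  have hvalid := validWord_cons_of_mem_sawsAvoiding hQ (SimpleGraph.getLastD_ne_of_mem_sawSet hP hk)
  rw [tailPart, glue, List.drop_append_tail (by simp [hP.1])
    (getLast?_map_ofFactor_eq_head? hP hk hQ), List.map_map]
  exact (List.map_congr_left fun u hu => dropFirst_consLetter (hvalid u hu)).trans (List.map_id _)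

end Backward

variable (G o) in
/-- The walks in `sawsVia G o i n` whose first `k` steps, and no more, stay in the copy of
`G i` at the root. -/
def fiber (i : Fin r) (n k : ℕ) : Set (List (FPV V o)) :=
  {l ∈ sawsVia G o i n | (l.takeWhile isShort).length = k + 1}

theorem fiber_zero (i : Fin r) (n : ℕ) : fiber G o i n 0 = ∅ :=
  Set.eq_empty_of_forall_notMem fun _ ⟨hl, hlk⟩ => by
    have := one_lt_length_takeWhile hl
    omega

theorem bijOn_fiber {i : Fin r} {k : ℕ} (hk : k ≠ 0) (m : ℕ) :
    Set.BijOn (fun l => (headPart o i k l, tailPart o k l)) (fiber G o i (k + m) k)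
      ((G i).sawSet (o i) k ×ˢ sawsAvoiding G o i m) := by
  refine ⟨fun l ⟨hl, hlk⟩ => ⟨headPart_mem_sawSet hl hlk, ?_⟩,
    fun l ⟨hl, hlk⟩ l' ⟨hl', hlk'⟩ h => ?_, fun ⟨P, Q⟩ ⟨hP, hQ⟩ => ?_⟩
  · simpa using tailPart_mem_sawsAvoiding hl hlk
  · obtain ⟨hP, hQ⟩ := Prod.mk.inj h
    rw [← glue_headPart_tailPart hl hlk, ← glue_headPart_tailPart hl' hlk', hP, hQ]
  · exact ⟨glue o i P Q, ⟨glue_mem_sawsVia hP hk hQ, length_takeWhile_glue hP hk hQ⟩,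
      Prod.ext (headPart_glue hP) (tailPart_glue hP hk hQ)⟩

theorem ncard_fiber {i : Fin r} {k : ℕ} (hk : k ≠ 0) (m : ℕ) :
    (fiber G o i (k + m) k).ncard = sawCount (G i) (o i) k * (sawsAvoiding G o i m).ncard := by
  rw [(bijOn_fiber hk m).ncard_eq, Set.ncard_prod, SimpleGraph.sawCount_eq_ncard_sawSet]

open Finset in
theorem sawCountVia_eq_sum (hlf : ∀ i, LocFinite (G i)) (i : Fin r) (n : ℕ) :
    sawCountVia G o i n = ∑ p ∈ antidiagonal n,
      (if p.1 = 0 then 0 else sawCount (G i) (o i) p.1) * (sawsAvoiding G o i p.2).ncard := by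
  have hcover : sawsVia G o i n =
      ⋃ p ∈ (antidiagonal n : Set (ℕ × ℕ)), fiber G o i n p.1 := by
    ext l
    simp only [Set.mem_iUnion, Finset.mem_coe, HasAntidiagonal.mem_antidiagonal, exists_prop]
    refine ⟨fun hl => ?_, fun ⟨_, _, hl⟩ => hl.1⟩
    have h₁ := one_lt_length_takeWhile hl
    have h₂ := (List.takeWhile_sublist isShort (l := l)).length_le
    rw [hl.1.1] at h₂
    exact ⟨((l.takeWhile isShort).length - 1, n + 1 - (l.takeWhile isShort).length),
      by simp only; omega, hl, by simp only; omega⟩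
  rw [sawCountVia_eq_ncard, hcover, Set.Finite.ncard_biUnion (Finset.finite_toSet _)
    (fun _ _ => (SimpleGraph.finite_sawSet (freeProd_neighborSet_finite hlf) _ n).subset
      fun _ hl => hl.1.1), finsum_mem_coe_finset]
  · refine Finset.sum_congr rfl fun ⟨k, m⟩ hp => ?_
    obtain rfl := HasAntidiagonal.mem_antidiagonal.mp hp
    split_ifs with hk
    · rw [show k = 0 from hk, fiber_zero, Set.ncard_empty, zero_mul]
    · exact ncard_fiber hk m
  · refine fun p hp q hq hpq => Set.disjoint_left.mpr fun l hl hl' => hpq ?_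
    exact (HasAntidiagonal.antidiagonal_congr hp hq).mpr (by have := hl.2.symm.trans hl'.2; omega)

theorem coeff_one_add_sum (hlf : ∀ i, LocFinite (G i)) (i : Fin r) (m : ℕ) :
    PowerSeries.coeff m (1 + ∑ j ∈ Finset.univ.erase i,
      PowerSeries.mk fun n => (sawCountVia G o j n : ℚ)) =
      ((sawsAvoiding G o i m).ncard : ℚ) := by
  rw [ncard_sawsAvoiding hlf, map_add, PowerSeries.coeff_one, map_sum]
  simp only [PowerSeries.coeff_mk]
  split_ifs with hm
  · simp [hm, sawCountVia_zero]
  · simp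

end FreeProd

theorem freeProd_Mstar_equation_general {r : ℕ}
    (V : Fin r → Type) (G : ∀ i, SimpleGraph (V i)) (o : ∀ i, V i)
    (hlf : ∀ i, LocFinite (G i))
    (i : Fin r) :
    (PowerSeries.mk fun n => (sawCountVia G o i n : ℚ))
      = (PowerSeries.mk fun n => if n = 0 then (0 : ℚ) else (sawCount (G i) (o i) n : ℚ))
        * (1 + ∑ j ∈ Finset.univ.erase i,
            PowerSeries.mk fun n => (sawCountVia G o j n : ℚ)) := by
  ext n
  rw [PowerSeries.coeff_mk, PowerSeries.coeff_mul, FreeProd.sawCountVia_eq_sum hlf, Nat.cast_sum]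
  refine Finset.sum_congr rfl fun p _ => ?_
  rw [PowerSeries.coeff_mk, FreeProd.coeff_one_add_sum hlf]
  split_ifs <;> simp

/-- On the free product `G = G₁ * ⋯ * G_r` of connected, locally finite, quasi-transitive
rooted graphs, for each `i` the generating function `Mᵢ*(z)` of SAWs from the root that
visit `Vᵢ \ {oᵢ}` satisfies `Mᵢ*(z) = Mᵢ(z)·(1 + Σ_{j≠i} Mⱼ*(z))` as formal power series. -/
theorem freeProd_Mstar_equation {r : ℕ} (hr : 2 ≤ r)
    (V : Fin r → Type) (G : ∀ i, SimpleGraph (V i)) (o : ∀ i, V i)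
    (hconn : ∀ i, (G i).Connected) (hqt : ∀ i, QuasiTransitive (G i))
    (hlf : ∀ i, LocFinite (G i)) (hnt : ∀ i, Nontrivial (V i))
    (i : Fin r) :
    (PowerSeries.mk fun n => (sawCountVia G o i n : ℚ))
      = (PowerSeries.mk fun n => if n = 0 then (0 : ℚ) else (sawCount (G i) (o i) n : ℚ))
        * (1 + ∑ j ∈ Finset.univ.erase i,
            PowerSeries.mk fun n => (sawCountVia G o j n : ℚ)) :=
  freeProd_Mstar_equation_general V G o hlf i
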